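/- arXiv:2205.07958 — 2 statements merged into one kernel-verified Lean document; each statement's English description precedes it below -/
import Mathlib

section
/- The complex number λ = a·b is not a root of unity: for every positive integer n, (a·b)^n ≠ 1. -/
/-!
The four roots are `a, b, conj a, conj b`, so by Vieta their elementary symmetric functions are
`0, 0, -1, 1`. Hence `λ = a b` has `λ⁻¹ = conj a * conj b`, and `s = λ + λ⁻¹ = a b + conj a conj b`
is a root of the resolvent cubic `Y³ - 4Y - 1`, which is irreducible over `ℚ` and has a real root
`u > 2`. If `λⁿ = 1`, then `s` is a root of `Dₙ(Y) - 2`, where `Dₙ` is the Dickson polynomial with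
`Dₙ(x + x⁻¹) = xⁿ + x⁻ⁿ`; hence so is its conjugate `u`. But writing `u = t + t⁻¹` with `t > 1`
gives `Dₙ(u) = tⁿ + t⁻ⁿ > 2`.
-/

open Polynomial ComplexConjugate

theorem Polynomial.prod_multiset_X_sub_C_of_nodup {R : Type*} [CommRing R] [IsDomain R] {p : R[X]}
    (hp : p.Monic) {s : Multiset R} (hs : s.Nodup) (hroots : ∀ x ∈ s, p.IsRoot x)
    (hcard : p.natDegree ≤ Multiset.card s) : (s.map fun x => X - C x).prod = p := by
  have hs_eq : s = p.roots :=
    Multiset.eq_of_le_of_card_le ((Multiset.le_iff_subset hs).mpr fun x hx =>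
      (mem_roots hp.ne_zero).mpr (hroots x hx)) (p.card_roots'.trans hcard)
  subst hs_eq
  exact prod_multiset_X_sub_C_of_monic_of_roots_card_eq hp (p.card_roots'.antisymm hcard)

/-- The cubic is `∏ (Y - y)` over the three pairings `y = x₁x₂ + x₃x₄, x₁x₃ + x₂x₄, x₁x₄ + x₂x₃`,
written through the elementary symmetric functions `eᵢ`. -/
theorem quartic_resolvent_cubic_eq_zero {R : Type*} [CommRing R] {x₁ x₂ x₃ x₄ e₁ e₂ e₃ e₄ : R}
    (h₁ : x₁ + x₂ + x₃ + x₄ = e₁)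
    (h₂ : x₁ * x₂ + x₁ * x₃ + x₁ * x₄ + x₂ * x₃ + x₂ * x₄ + x₃ * x₄ = e₂)
    (h₃ : x₁ * x₂ * x₃ + x₁ * x₂ * x₄ + x₁ * x₃ * x₄ + x₂ * x₃ * x₄ = e₃)
    (h₄ : x₁ * x₂ * x₃ * x₄ = e₄) :
    (x₁ * x₂ + x₃ * x₄) ^ 3 - e₂ * (x₁ * x₂ + x₃ * x₄) ^ 2
      + (e₁ * e₃ - 4 * e₄) * (x₁ * x₂ + x₃ * x₄) - (e₁ ^ 2 * e₄ + e₃ ^ 2 - 4 * e₂ * e₄) = 0 := by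
  subst_vars
  ring

theorem resolvent_cubic_of_prod_eq_X_pow_four_add_X_add_one {R : Type*} [CommRing R]
    {x₁ x₂ x₃ x₄ : R}
    (h : (X - C x₁) * (X - C x₂) * (X - C x₃) * (X - C x₄) = (X ^ 4 + X + 1 : R[X])) :
    (x₁ * x₂ + x₃ * x₄) ^ 3 - 4 * (x₁ * x₂ + x₃ * x₄) - 1 = 0 ∧ x₁ * x₂ * (x₃ * x₄) = 1 := by
  rw [show (X - C x₁) * (X - C x₂) * (X - C x₃) * (X - C x₄) =
      X ^ 4 - C (x₁ + x₂ + x₃ + x₄) * X ^ 3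
        + C (x₁ * x₂ + x₁ * x₃ + x₁ * x₄ + x₂ * x₃ + x₂ * x₄ + x₃ * x₄) * X ^ 2
        - C (x₁ * x₂ * x₃ + x₁ * x₂ * x₄ + x₁ * x₃ * x₄ + x₂ * x₃ * x₄) * X
        + C (x₁ * x₂ * x₃ * x₄) by simp only [map_add, map_mul]; ring] at h
  have h₀ := congrArg (coeff · 0) h
  have h₁ := congrArg (coeff · 1) h
  have h₂ := congrArg (coeff · 2) h
  have h₃ := congrArg (coeff · 3) h
  simp only [coeff_add, coeff_sub, coeff_C_mul, coeff_X_pow, coeff_X, coeff_C, coeff_one]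
    at h₀ h₁ h₂ h₃
  norm_num at h₀ h₁ h₂ h₃
  have := quartic_resolvent_cubic_eq_zero (e₁ := 0) (e₃ := -1) (by linear_combination -h₃) h₂
    (by linear_combination -h₁) h₀
  exact ⟨by linear_combination this, by linear_combination h₀⟩

theorem irreducible_X_pow_three_sub_four_mul_X_sub_one :
    Irreducible (X ^ 3 - 4 * X - 1 : ℚ[X]) := by
  have hdeg : (X ^ 3 - 4 * X - 1 : ℚ[X]).natDegree = 3 := by compute_degree!
  rw [irreducible_iff_roots_eq_zero_of_degree_le_three (by rw [hdeg]; norm_num) (by rw [hdeg]),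
    Multiset.eq_zero_iff_forall_notMem]
  intro q hq
  have hq : q ^ 3 - 4 * q - 1 = 0 := by simpa using isRoot_of_mem_roots hq
  have hmonic : (X ^ 3 - 4 * X - 1 : ℤ[X]).Monic := by monicity!
  obtain ⟨z, rfl⟩ := isInteger_of_is_root_of_monic hmonic (r := q) (by simpa [map_ofNat] using hq)
  have hz : z ^ 3 - 4 * z - 1 = 0 := by
    rw [algebraMap_int_eq, eq_intCast] at hq
    exact_mod_cast hq
  have hunit : IsUnit z := isUnit_of_dvd_one ⟨z ^ 2 - 4, by linear_combination -hz⟩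
  rcases Int.isUnit_iff.mp hunit with rfl | rfl <;> norm_num at hz

theorem exists_two_lt_cubic_root : ∃ u : ℝ, 2 < u ∧ u ^ 3 - 4 * u - 1 = 0 := by
  obtain ⟨u, hu, hroot⟩ := intermediate_value_Ioo (by norm_num : (2 : ℝ) ≤ 3)
    (f := fun x : ℝ => x ^ 3 - 4 * x - 1) (by fun_prop)
    (show (0 : ℝ) ∈ Set.Ioo (2 ^ 3 - 4 * 2 - 1) (3 ^ 3 - 4 * 3 - 1) by norm_num)
  exact ⟨u, hu.1, hroot⟩

theorem two_lt_eval_dickson_one_one {u : ℝ} (hu : 2 < u) {n : ℕ} (hn : 0 < n) :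
    2 < (dickson 1 (1 : ℝ) n).eval u := by
  obtain ⟨t, t', htt', rfl, ht⟩ : ∃ t t' : ℝ, t * t' = 1 ∧ t + t' = u ∧ 1 < t := by
    have hr : √(u ^ 2 - 4) ^ 2 = u ^ 2 - 4 := Real.sq_sqrt (by nlinarith)
    exact ⟨(u + √(u ^ 2 - 4)) / 2, (u - √(u ^ 2 - 4)) / 2, by linear_combination -hr / 4,
      by ring, by linarith [Real.sqrt_nonneg (u ^ 2 - 4)]⟩
  rw [dickson_one_one_eval_add_inv t t' htt']
  have htn : 1 < t ^ n := one_lt_pow₀ ht hn.ne'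
  have hprod : t ^ n * t' ^ n = 1 := by rw [← mul_pow, htt', one_pow]
  nlinarith

theorem pow_ne_one_of_aeval_minpoly_add_inv {K : Type*} [Field K] [Algebra ℚ K] {x : K} {u : ℝ}
    (hu : 2 < u) (hux : aeval u (minpoly ℚ (x + x⁻¹)) = 0) {n : ℕ} (hn : 0 < n) : x ^ n ≠ 1 := by
  intro hxn
  have hx : x ≠ 0 := by rintro rfl; simp [zero_pow hn.ne'] at hxn
  have hD : aeval (x + x⁻¹) (dickson 1 (1 : ℚ) n - 2) = 0 := by
    rw [map_sub, aeval_def, eval₂_eq_eval_map, map_dickson, map_one,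
      dickson_one_one_eval_add_inv x x⁻¹ (mul_inv_cancel₀ hx), inv_pow, hxn, map_ofNat]
    norm_num
  obtain ⟨q, hq⟩ := minpoly.dvd ℚ _ hD
  have hDu : aeval u (dickson 1 (1 : ℚ) n - 2) = 0 := by rw [hq, map_mul, hux, zero_mul]
  rw [map_sub, aeval_def, eval₂_eq_eval_map, map_dickson, map_one, map_ofNat] at hDu
  linarith [two_lt_eval_dickson_one_one hu hn]

theorem isRoot_X_pow_four_add_X_add_one_conj {z : ℂ} (hz : (X ^ 4 + X + 1 : ℂ[X]).IsRoot z) :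
    (X ^ 4 + X + 1 : ℂ[X]).IsRoot (conj z) := by
  simpa using congrArg conj hz

theorem conj_ne_self_of_isRoot_X_pow_four_add_X_add_one {z : ℂ}
    (hz : (X ^ 4 + X + 1 : ℂ[X]).IsRoot z) : conj z ≠ z := by
  intro h
  obtain ⟨r, rfl⟩ := Complex.conj_eq_iff_real.mp h
  have hr : r ^ 4 + r + 1 = 0 := by exact_mod_cast (show (r : ℂ) ^ 4 + r + 1 = 0 by simpa using hz)
  nlinarith [sq_nonneg (r ^ 2 - 1 / 2), sq_nonneg (r + 1 / 2)]

theorem prod_X_sub_C_conj_eq_X_pow_four_add_X_add_one {a b : ℂ}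
    (ha : (X ^ 4 + X + 1 : ℂ[X]).IsRoot a) (hb : (X ^ 4 + X + 1 : ℂ[X]).IsRoot b)
    (hba : b ≠ a) (hbconj : b ≠ conj a) :
    (X - C a) * (X - C b) * (X - C (conj a)) * (X - C (conj b)) =
      (X ^ 4 + X + 1 : ℂ[X]) := by
  have hmonic : (X ^ 4 + X + 1 : ℂ[X]).Monic := by monicity!
  have hnodup : ({a, b, conj a, conj b} : Multiset ℂ).Nodup := by
    simp only [Multiset.insert_eq_cons, Multiset.nodup_cons, Multiset.mem_cons,
      Multiset.mem_singleton, Multiset.nodup_singleton, not_or]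
    refine ⟨⟨hba.symm, (conj_ne_self_of_isRoot_X_pow_four_add_X_add_one ha).symm,
      fun h => hbconj (by rw [h, Complex.conj_conj])⟩,
      ⟨hbconj, (conj_ne_self_of_isRoot_X_pow_four_add_X_add_one hb).symm⟩,
      fun h => hba (star_injective h).symm, trivial⟩
  have hroots : ∀ z ∈ ({a, b, conj a, conj b} : Multiset ℂ),
      (X ^ 4 + X + 1 : ℂ[X]).IsRoot z := by
    simp only [Multiset.insert_eq_cons, Multiset.mem_cons, Multiset.mem_singleton]
    rintro z (rfl | rfl | rfl | rfl)
    exacts [ha, hb, isRoot_X_pow_four_add_X_add_one_conj ha,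
      isRoot_X_pow_four_add_X_add_one_conj hb]
  have hdeg : (X ^ 4 + X + 1 : ℂ[X]).natDegree ≤ 4 := by compute_degree!
  simpa [mul_assoc] using prod_multiset_X_sub_C_of_nodup hmonic hnodup hroots hdeg

/-- If `a` and `b` are complex roots of `X^4 + X + 1` with `b ≠ a` and
`b ≠ conj a` (so the four roots are `a, conj a, b, conj b`), then `λ = a·b`
is not a root of unity: `(a·b)^n ≠ 1` for every positive integer `n`. -/
theorem stmt_6 (a b : ℂ)
    (ha : (X ^ 4 + X + 1 : ℂ[X]).IsRoot a)
    (hb : (X ^ 4 + X + 1 : ℂ[X]).IsRoot b)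
    (hba : b ≠ a) (hbconj : b ≠ (starRingEnd ℂ) a) :
    ∀ n : ℕ, 0 < n → (a * b) ^ n ≠ 1 := by
  intro n hn
  obtain ⟨hs, hinv⟩ := resolvent_cubic_of_prod_eq_X_pow_four_add_X_add_one
    (prod_X_sub_C_conj_eq_X_pow_four_add_X_add_one ha hb hba hbconj)
  rw [← inv_eq_of_mul_eq_one_right hinv] at hs
  have hmin : (X ^ 3 - 4 * X - 1 : ℚ[X]) = minpoly ℚ (a * b + (a * b)⁻¹) :=
    minpoly.eq_of_irreducible_of_monic irreducible_X_pow_three_sub_four_mul_X_sub_one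
      (by simpa [map_ofNat] using hs) (by monicity!)
  obtain ⟨u, hu2, hu⟩ := exists_two_lt_cubic_root
  exact pow_ne_one_of_aeval_minpoly_add_inv hu2 (by rw [← hmin]; simpa [map_ofNat] using hu) hn
end

section
/- If Q is a polynomial with real coefficients of degree at most 3 such that Q(a) = 0 and Q(b) = 0, then Q is the zero polynomial. -/
open Polynomial ComplexConjugate

lemma pow_four_add_self_add_one_pos (x : ℝ) : 0 < x ^ 4 + x + 1 := by
  nlinarith [sq_nonneg (x ^ 2 - 1 / 2), sq_nonneg (x + 1 / 2)]

lemma conj_ne_self_of_isRoot {a : ℂ} (ha : (X ^ 4 + X + 1 : ℂ[X]).IsRoot a) : conj a ≠ a := by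
  intro hreal
  obtain ⟨x, rfl⟩ := Complex.conj_eq_iff_real.mp hreal
  have hx : ((x ^ 4 + x + 1 : ℝ) : ℂ) = 0 := by simpa using ha
  exact (pow_four_add_self_add_one_pos x).ne' (mod_cast hx)

/-- Real polynomials vanish at conjugate pairs, so two non-real roots that are not conjugate
give four distinct roots. -/
lemma eq_zero_of_natDegree_lt_four_of_aeval_eq_zero {Q : ℝ[X]} (hdeg : Q.natDegree < 4)
    {a b : ℂ} (ha : conj a ≠ a) (hb : conj b ≠ b) (hba : b ≠ a) (hbconj : b ≠ conj a)
    (hQa : aeval a Q = 0) (hQb : aeval b Q = 0) : Q = 0 := by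
  have hroot : ∀ z ∈ ({a, conj a, b, conj b} : Finset ℂ), (Q.map (algebraMap ℝ ℂ)).eval z = 0 := by
    simp only [Finset.mem_insert, Finset.mem_singleton, eval_map_algebraMap]
    rintro z (rfl | rfl | rfl | rfl) <;> simp [aeval_conj, hQa, hQb]
  have hcard : ({a, conj a, b, conj b} : Finset ℂ).card = 4 := by
    have hacb : a ≠ conj b := fun h => hbconj (by rw [h, Complex.conj_conj])
    have hcacb : conj a ≠ conj b := fun h => hba ((starRingEnd ℂ).injective h).symm
    rw [Finset.card_insert_of_notMem (by simp [ha.symm, hba.symm, hacb]),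
      Finset.card_insert_of_notMem (by simp [hbconj.symm, hcacb]),
      Finset.card_insert_of_notMem (by simp [hb.symm]), Finset.card_singleton]
  have hmap := eq_zero_of_natDegree_lt_card_of_eval_eq_zero' _ _ hroot
    (by rwa [natDegree_map, hcard])
  exact (Polynomial.map_eq_zero_iff (algebraMap ℝ ℂ).injective).mp hmap

/-- If `a` and `b` are complex roots of `X^4 + X + 1` with `b ≠ a` and
`b ≠ conj a` (so the four roots are `a, conj a, b, conj b`), and `Q` is a real
polynomial of degree at most `3` with `Q(a) = 0` and `Q(b) = 0`, then `Q = 0`. -/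
theorem stmt_8 (a b : ℂ)
    (ha : (X ^ 4 + X + 1 : ℂ[X]).IsRoot a)
    (hb : (X ^ 4 + X + 1 : ℂ[X]).IsRoot b)
    (hba : b ≠ a) (hbconj : b ≠ (starRingEnd ℂ) a)
    (Q : ℝ[X]) (hdeg : Q.degree ≤ 3)
    (hQa : aeval a Q = 0) (hQb : aeval b Q = 0) :
    Q = 0 :=
  eq_zero_of_natDegree_lt_four_of_aeval_eq_zero
    (Nat.lt_succ_of_le (natDegree_le_iff_degree_le.mpr hdeg))
    (conj_ne_self_of_isRoot ha) (conj_ne_self_of_isRoot hb) hba hbconj hQa hQb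
end
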